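/- arXiv:1801.06112 — 6 statements merged into one kernel-verified Lean document; each statement's English description precedes it below -/
import Mathlib

section
/- Let K be a field, P = K[x_1,...,x_n], σ a term ordering on the monoid of power-products, and I, J ideals in P. If I is strictly contained in J, then the leading term ideal LT_σ(I) is strictly contained in LT_σ(J). -/
open MvPolynomial
open scoped Classical

namespace GB

variable {n : ℕ}

/-- The σ-leading exponent (leading term, as a power-product) of a polynomial;
`0` for the zero polynomial. -/
noncomputable def lexp {K : Type*} [CommSemiring K] (m : MonomialOrder (Fin n))
    (f : MvPolynomial (Fin n) K) : Fin n →₀ ℕ :=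
  m.toSyn.symm (f.support.sup fun d => m.toSyn d)

/-- The σ-leading coefficient. -/
noncomputable def lcoeff {K : Type*} [CommSemiring K] (m : MonomialOrder (Fin n))
    (f : MvPolynomial (Fin n) K) : K :=
  MvPolynomial.coeff (lexp m f) f

/-- The σ-leading monomial (leading coefficient times leading power-product). -/
noncomputable def LM {K : Type*} [CommSemiring K] (m : MonomialOrder (Fin n))
    (f : MvPolynomial (Fin n) K) : MvPolynomial (Fin n) K :=
  monomial (lexp m f) (lcoeff m f)

/-- The leading term ideal `LT_σ(I)` of an ideal, over a field. -/
noncomputable def LTIdeal {K : Type*} [Field K] (m : MonomialOrder (Fin n))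
    (I : Ideal (MvPolynomial (Fin n) K)) : Ideal (MvPolynomial (Fin n) K) :=
  Ideal.span {t | ∃ f ∈ I, f ≠ 0 ∧ t = monomial (lexp m f) (1 : K)}

/-- `G` is a σ-Gröbner basis of `I` (over a field). -/
def IsGB {K : Type*} [Field K] (m : MonomialOrder (Fin n))
    (G : Finset (MvPolynomial (Fin n) K)) (I : Ideal (MvPolynomial (Fin n) K)) : Prop :=
  (0 : MvPolynomial (Fin n) K) ∉ G ∧ (G : Set (MvPolynomial (Fin n) K)) ⊆ I ∧
    Ideal.span (G : Set (MvPolynomial (Fin n) K)) = I ∧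
    ∀ f ∈ I, f ≠ 0 → ∃ g ∈ G, lexp m g ≤ lexp m f

/-- `G` is the reduced σ-Gröbner basis of `I`. -/
def IsReducedGB {K : Type*} [Field K] (m : MonomialOrder (Fin n))
    (G : Finset (MvPolynomial (Fin n) K)) (I : Ideal (MvPolynomial (Fin n) K)) : Prop :=
  IsGB m G I ∧ (∀ g ∈ G, lcoeff m g = 1) ∧
    ∀ g ∈ G, ∀ d ∈ g.support, ∀ g' ∈ G, g' ≠ g → ¬ lexp m g' ≤ d

/-- `G` is a strong σ-Gröbner basis of the ideal `J ⊆ ℤ[x]` it generates. -/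
def IsStrongGB (m : MonomialOrder (Fin n)) (G : Finset (MvPolynomial (Fin n) ℤ))
    (J : Ideal (MvPolynomial (Fin n) ℤ)) : Prop :=
  (0 : MvPolynomial (Fin n) ℤ) ∉ G ∧ Ideal.span (G : Set (MvPolynomial (Fin n) ℤ)) = J ∧
    ∀ f ∈ J, f ≠ 0 → ∃ g ∈ G, LM m g ∣ LM m f

/-- `G` is a minimal strong σ-Gröbner basis of `J`. -/
def IsMinStrongGB (m : MonomialOrder (Fin n)) (G : Finset (MvPolynomial (Fin n) ℤ))
    (J : Ideal (MvPolynomial (Fin n) ℤ)) : Prop :=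
  IsStrongGB m G J ∧ ∀ g ∈ G, ∀ g' ∈ G, g ≠ g' → ¬ LM m g ∣ LM m g'

/-- The denominator of a polynomial with rational coefficients. -/
def den (f : MvPolynomial (Fin n) ℚ) : ℕ :=
  f.support.lcm fun d => (MvPolynomial.coeff d f).den

/-- The denominator of a finite set of polynomials. -/
noncomputable def denF (G : Finset (MvPolynomial (Fin n) ℚ)) : ℕ :=
  G.lcm den

/-- `f` scaled by `den f`, as an integer polynomial. -/
noncomputable def intScale (f : MvPolynomial (Fin n) ℚ) : MvPolynomial (Fin n) ℤ :=
  f.support.sum fun d => monomial d (MvPolynomial.coeff d f * (den f : ℚ)).num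

/-- The primitive integral part of a polynomial with rational coefficients. -/
noncomputable def primQ (f : MvPolynomial (Fin n) ℚ) : MvPolynomial (Fin n) ℤ :=
  (intScale f).support.sum fun d =>
    monomial d (MvPolynomial.coeff d (intScale f) /
      ((intScale f).support.gcd fun e => MvPolynomial.coeff e (intScale f)))

/-- Reduction of a rational number modulo `p` (meaningful when `p ∤ a.den`). -/
noncomputable def redQ (p : ℕ) (a : ℚ) : ZMod p :=
  (a.num : ZMod p) * (a.den : ZMod p)⁻¹

/-- Coefficientwise reduction modulo `p` of a polynomial with rational coefficients
(meaningful when `p` divides no coefficient denominator). -/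
noncomputable def piP (p : ℕ) (f : MvPolynomial (Fin n) ℚ) :
    MvPolynomial (Fin n) (ZMod p) :=
  f.support.sum fun d => monomial d (redQ p (MvPolynomial.coeff d f))

/-- A σ-ordered tuple of (necessarily distinct) power-products. -/
def SOrd (m : MonomialOrder (Fin n)) (L : List (Fin n →₀ ℕ)) : Prop :=
  L.Pairwise fun a b => m.toSyn a < m.toSyn b

/-- `T'` strictly σ-precedes `T`:  either `T` is a proper prefix of `T'`, or at the first
index where they differ (within both lengths) the entry of `T'` is σ-smaller. -/
def Prec (m : MonomialOrder (Fin n)) (T' T : List (Fin n →₀ ℕ)) : Prop :=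
  (T <+: T' ∧ T ≠ T') ∨
    ∃ k, k < T.length ∧ k < T'.length ∧ T.take k = T'.take k ∧
      m.toSyn (T'.getD k 0) < m.toSyn (T.getD k 0)

/-- `T'` σ-precedes or equals `T`. -/
def PrecEq (m : MonomialOrder (Fin n)) (T' T : List (Fin n →₀ ℕ)) : Prop :=
  Prec m T' T ∨ T' = T

/-- The minimal generating set of the monomial ideal `LT_σ(I)`: the set of leading
power-products of nonzero elements of `I` which are minimal w.r.t. divisibility. -/
def minGenSet {K : Type*} [Field K] (m : MonomialOrder (Fin n))
    (I : Ideal (MvPolynomial (Fin n) K)) : Set (Fin n →₀ ℕ) :=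
  {d | (∃ f ∈ I, f ≠ 0 ∧ lexp m f = d) ∧
    ∀ f ∈ I, f ≠ 0 → lexp m f ≤ d → lexp m f = d}

/-- `L` is the tuple `O_σ(I)`: the σ-ordered tuple of the minimal generating set
of `LT_σ(I)`. -/
def IsOsIdeal {K : Type*} [Field K] (m : MonomialOrder (Fin n))
    (I : Ideal (MvPolynomial (Fin n) K)) (L : List (Fin n →₀ ℕ)) : Prop :=
  SOrd m L ∧ ∀ d, d ∈ L ↔ d ∈ minGenSet m I

/-- `L` is the σ-ordered tuple of the interreduction of the set `S` of power-products. -/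
def IsOsSet (m : MonomialOrder (Fin n)) (S : Finset (Fin n →₀ ℕ))
    (L : List (Fin n →₀ ℕ)) : Prop :=
  SOrd m L ∧ ∀ d, d ∈ L ↔ (d ∈ S ∧ ∀ s ∈ S, s ≤ d → s = d)

end GB

namespace GB

variable {n : ℕ} {K : Type*} [Field K] (m : MonomialOrder (Fin n))

theorem monomial_lexp_mem_LTIdeal {I : Ideal (MvPolynomial (Fin n) K)}
    {f : MvPolynomial (Fin n) K} (hf : f ∈ I) (hf0 : f ≠ 0) :
    monomial (lexp m f) (1 : K) ∈ LTIdeal m I :=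
  Ideal.subset_span ⟨f, hf, hf0, rfl⟩

theorem LTIdeal_mono {I J : Ideal (MvPolynomial (Fin n) K)} (h : I ≤ J) :
    LTIdeal m I ≤ LTIdeal m J :=
  Ideal.span_le.2 fun _ ⟨_, hf, hf0, ht⟩ => ht ▸ monomial_lexp_mem_LTIdeal m (h hf) hf0

theorem exists_lexp_le_of_monomial_mem_LTIdeal {I : Ideal (MvPolynomial (Fin n) K)}
    {e : Fin n →₀ ℕ} (he : monomial e (1 : K) ∈ LTIdeal m I) :
    ∃ g ∈ I, g ≠ 0 ∧ lexp m g ≤ e := by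
  have hspan : LTIdeal m I = Ideal.span ((fun d => monomial d (1 : K)) ''
      {d | ∃ f ∈ I, f ≠ 0 ∧ lexp m f = d}) := by
    unfold LTIdeal
    congr 1
    ext
    simp only [Set.mem_ofPred_eq, Set.mem_image]
    grind
  rw [hspan, mem_ideal_span_monomial_image] at he
  obtain ⟨_, ⟨g, hgI, hg0, rfl⟩, hle⟩ := he e (by simp)
  exact ⟨g, hgI, hg0, hle⟩

/-- Dividing `f ∈ J` by all nonzero elements of `I` leaves a remainder in `J` none of whose
monomials lies in `LT_σ(I)`; if `LT_σ(J) ≤ LT_σ(I)` that remainder must vanish. -/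
theorem le_of_le_of_LTIdeal_le {I J : Ideal (MvPolynomial (Fin n) K)} (hIJ : I ≤ J)
    (hLT : LTIdeal m J ≤ LTIdeal m I) : J ≤ I := by
  intro f hf
  obtain ⟨q, r, hfqr, -, hr⟩ := m.div_set (B := {b | b ∈ I ∧ b ≠ 0})
    (fun b hb => isUnit_iff_ne_zero.2 (m.leadingCoeff_ne_zero_iff.2 hb.2)) f
  have hfrI : f - r ∈ I := by
    rw [hfqr, add_sub_cancel_right, Finsupp.linearCombination_apply]
    exact I.sum_mem fun b _ => I.mul_mem_left _ b.2.1
  suffices hr0 : r = 0 by simpa [hr0] using hfrI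
  by_contra hr0
  have hrJ : r ∈ J := by simpa using J.sub_mem hf (hIJ hfrI)
  obtain ⟨g, hgI, hg0, hgr⟩ :=
    exists_lexp_le_of_monomial_mem_LTIdeal m (hLT (monomial_lexp_mem_LTIdeal m hrJ hr0))
  -- `lexp` is `MonomialOrder.degree` unfolded
  exact hr _ (m.degree_mem_support hr0) g ⟨hgI, hg0⟩ hgr

end GB

/-- If `I ⊊ J` then `LT_σ(I) ⊊ LT_σ(J)`. -/
theorem stmt0 {n : ℕ} {K : Type*} [Field K] (m : MonomialOrder (Fin n))
    (I J : Ideal (MvPolynomial (Fin n) K)) (h : I < J) :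
    GB.LTIdeal m I < GB.LTIdeal m J :=
  (GB.LTIdeal_mono m h.le).lt_of_not_ge fun hle => h.not_ge (GB.le_of_le_of_LTIdeal_le m h.le hle)
end

section
/- Let K be a field, P = K[x_1,...,x_n], σ a term ordering, J an ideal in P, and F a finite set of nonzero polynomials in J. If F is not a σ-Gröbner basis of J, then O_σ(J) strictly σ-precedes O_σ(F), i.e. O_σ(J) ≺_σ O_σ(F). -/
/-
Every power-product of `O_σ(F)` is the leading term of an element of `J`, hence is divisible by
an entry of `O_σ(J)`. If `F` is not a Gröbner basis, some minimal generator `e` of `LT_σ(J)`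
is divisible by no leading term of `F`, so `e ∉ O_σ(F)` and the two tuples differ. Walking along
both σ-sorted tuples, at the first place where they differ the entry of `O_σ(J)` cannot be
σ-larger than that of `O_σ(F)`: the latter is divisible by an entry of `O_σ(J)` which, since the
common prefix is an antichain for divisibility, comes no earlier, and divisibility implies
`≤_σ`.
-/

open MvPolynomial
open scoped Classical

namespace GB

variable {n : ℕ}

theorem exists_mem_minGenSet_le {K : Type*} [Field K] (m : MonomialOrder (Fin n))
    {J : Ideal (MvPolynomial (Fin n) K)} {f : MvPolynomial (Fin n) K} (hf : f ∈ J)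
    (hf0 : f ≠ 0) : ∃ e ∈ minGenSet m J, e ≤ lexp m f := by
  obtain ⟨e, hle, ⟨g, hgJ, hg0, rfl⟩, hmin⟩ :=
    exists_minimal_le_of_wellFoundedLT (fun d => ∃ g ∈ J, g ≠ 0 ∧ lexp m g = d) (lexp m f)
      ⟨f, hf, hf0, rfl⟩
  exact ⟨lexp m g, ⟨⟨g, hgJ, hg0, rfl⟩, fun f' hf'J hf'0 hle' =>
    le_antisymm hle' (hmin ⟨f', hf'J, hf'0, rfl⟩ hle')⟩, hle⟩

theorem IsOsSet.isAntichain {m : MonomialOrder (Fin n)} {S : Finset (Fin n →₀ ℕ)}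
    {L : List (Fin n →₀ ℕ)} (hL : IsOsSet m S L) : IsAntichain (· ≤ ·) {d | d ∈ L} :=
  fun _ hd _ hd' hne hle => hne (((hL.2 _).1 hd').2 _ ((hL.2 _).1 hd).1 hle)

theorem prec_of_forall_exists_le (m : MonomialOrder (Fin n)) :
    ∀ {L LF : List (Fin n →₀ ℕ)}, SOrd m L → SOrd m LF → IsAntichain (· ≤ ·) {d | d ∈ LF} →
      (∀ d ∈ LF, ∃ a ∈ L, a ≤ d) → L ≠ LF → Prec m L LF
  | L, [], _, _, _, _, hne => Or.inl ⟨List.nil_prefix, fun h => hne h.symm⟩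
  | [], b :: _, _, _, _, hdiv, _ => by
      obtain ⟨_, ha, -⟩ := hdiv b List.mem_cons_self
      cases ha
  | a :: L, b :: LF, hL, hLF, hanti, hdiv, hne => by
    rw [SOrd, List.pairwise_cons] at hL hLF
    rcases lt_trichotomy (m.toSyn a) (m.toSyn b) with hab | hab | hab
    · exact Or.inr ⟨0, by simp, by simp, rfl, by simpa using hab⟩
    · obtain rfl : a = b := m.toSyn.injective hab
      have hdiv' : ∀ d ∈ LF, ∃ a' ∈ L, a' ≤ d := by
        intro d hd
        obtain ⟨a', ha', hle⟩ := hdiv d (List.mem_cons_of_mem _ hd)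
        rcases List.mem_cons.mp ha' with rfl | ha'
        · exact absurd hle (hanti List.mem_cons_self (List.mem_cons_of_mem _ hd)
            (ne_of_apply_ne m.toSyn (hLF.1 d hd).ne))
        · exact ⟨a', ha', hle⟩
      rcases prec_of_forall_exists_le m hL.2 hLF.2
          (hanti.subset fun _ hd => List.mem_cons_of_mem _ hd) hdiv'
          (fun h => hne (h ▸ rfl)) with ⟨hpre, hne'⟩ | ⟨k, hkL, hkLF, htake, hlt⟩
      · exact Or.inl ⟨List.cons_prefix_cons.mpr ⟨rfl, hpre⟩, fun h => hne' (List.cons.inj h).2⟩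
      · exact Or.inr ⟨k + 1, by simpa using hkL, by simpa using hkLF, by simp [htake],
          by simpa using hlt⟩
    · exfalso
      obtain ⟨a', ha', hle⟩ := hdiv b List.mem_cons_self
      have hle' : m.toSyn a ≤ m.toSyn a' := by
        rcases List.mem_cons.mp ha' with rfl | ha'
        exacts [le_rfl, (hL.1 a' ha').le]
      exact (hab.trans_le hle').not_ge (m.toSyn_monotone hle)

end GB

/-- if `F ⊆ J` is not a σ-Gröbner basis of `J` then `O_σ(J) ≺_σ O_σ(F)`. -/
theorem stmt4 {n : ℕ} {K : Type*} [Field K] (m : MonomialOrder (Fin n))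
    (J : Ideal (MvPolynomial (Fin n) K)) (F : Finset (MvPolynomial (Fin n) K))
    (hF0 : (0 : MvPolynomial (Fin n) K) ∉ F) (hFJ : (F : Set (MvPolynomial (Fin n) K)) ⊆ J)
    (hnotGB : ¬ ∀ f ∈ J, f ≠ 0 → ∃ g ∈ F, GB.lexp m g ≤ GB.lexp m f)
    (L LF : List (Fin n →₀ ℕ))
    (hL : GB.IsOsIdeal m J L) (hLF : GB.IsOsSet m (F.image (GB.lexp m)) LF) :
    GB.Prec m L LF := by
  push Not at hnotGB
  obtain ⟨f, hfJ, hf0, hfree⟩ := hnotGB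
  have hcover : ∀ d ∈ LF, ∃ a ∈ L, a ≤ d := by
    intro d hd
    obtain ⟨g, hgF, rfl⟩ := Finset.mem_image.mp ((hLF.2 d).1 hd).1
    obtain ⟨e, he, hle⟩ := GB.exists_mem_minGenSet_le m (hFJ hgF) (ne_of_mem_of_not_mem hgF hF0)
    exact ⟨e, (hL.2 e).2 he, hle⟩
  refine GB.prec_of_forall_exists_le m hL.1 hLF.1 hLF.isAntichain hcover ?_
  rintro rfl
  obtain ⟨e, he, hle⟩ := GB.exists_mem_minGenSet_le m hfJ hf0
  obtain ⟨g, hgF, rfl⟩ := Finset.mem_image.mp ((hLF.2 e).1 ((hL.2 e).2 he)).1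
  exact hfree g hgF hle
end

section
/- Let σ be a term ordering on T^n. Let T = (t_1,...,t_r) be an interreduced σ-ordered tuple of power-products and T' another finite set of power-products. Suppose there exist t' ∈ T' and an index k such that: t_1,...,t_{k-1} ∈ T'; t_k >_σ t'; and t' is not divisible by any t_i ∈ T. Then O_σ(T') ≺_σ T, and moreover T is not a proper prefix of O_σ(T'). -/
open MvPolynomial
open scoped Classical

/-!
Let `s ∈ O_σ(T')` divide `t'`; then `s ∉ T`. While `O_σ(T')` and `T` agree on their first `i < k`
entries, the `i`-th entry of `O_σ(T')` is σ-at most `t_i`: otherwise the divisor of `t_i ∈ T'` in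
`O_σ(T')` would be σ-smaller than that entry, hence in the common prefix, hence an element of `T`
properly σ-below `t_i` dividing it, against interreduction. Once they agree on `k` entries, `s`
lies beyond the common prefix, so the `k`-th entry of `O_σ(T')` is σ-at most `s ≤ t' <_σ t_k`.
Hence the first disagreement is a σ-descent at some index `j ≤ k`, which also keeps `T` from
being a prefix of `O_σ(T')`.
-/

namespace List

variable {α β : Type*} {L T : List α} {i : ℕ} {a : α}

theorem lt_length_of_mem_drop (h : a ∈ L.drop i) : i < L.length := by
  by_contra hi
  simp [drop_of_length_le (not_lt.mp hi)] at h

theorem mem_drop_of_mem_of_not_mem_take (ha : a ∈ L) (h : a ∉ L.take i) : a ∈ L.drop i := by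
  rw [← take_append_drop i L, mem_append] at ha
  exact ha.resolve_left h

theorem getD_mem_drop (d : α) (hi : i < L.length) : L.getD i d ∈ L.drop i := by
  rw [getD_eq_getElem _ _ hi, drop_eq_getElem_cons hi]
  exact mem_cons_self

theorem Pairwise.getD_le_of_mem_drop [Preorder β] {f : α → β}
    (hL : L.Pairwise fun a b => f a < f b) (d : α) (ha : a ∈ L.drop i) :
    f (L.getD i d) ≤ f a := by
  have hi := lt_length_of_mem_drop ha
  have hdrop := hL.drop (i := i)
  rw [drop_eq_getElem_cons hi] at ha hdrop
  rw [getD_eq_getElem _ _ hi]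
  rcases mem_cons.mp ha with rfl | ha
  · exact le_rfl
  · exact (pairwise_cons.mp hdrop).1 a ha |>.le

theorem exists_take_eq_and_getD_lt [PartialOrder β] {f : α → β} (hf : Function.Injective f)
    (d : α) {k : ℕ} (hk : k < T.length)
    (hstep : ∀ i < k, T.take i = L.take i → i < L.length ∧ f (L.getD i d) ≤ f (T.getD i d))
    (hlast : T.take k = L.take k → k < L.length ∧ f (L.getD k d) < f (T.getD k d)) :
    ∃ j ≤ k, j < L.length ∧ T.take j = L.take j ∧ f (L.getD j d) < f (T.getD j d) := by
  suffices H : ∀ i ≤ k, (∃ j ≤ k, j < L.length ∧ T.take j = L.take j ∧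
      f (L.getD j d) < f (T.getD j d)) ∨ T.take i = L.take i by
    obtain h | htake := H k le_rfl
    · exact h
    · exact ⟨k, le_rfl, (hlast htake).1, htake, (hlast htake).2⟩
  intro i hi
  induction i with
  | zero => simp
  | succ i ih =>
    obtain h | htake := ih (by omega)
    · exact Or.inl h
    obtain ⟨hiL, hle⟩ := hstep i (by omega) htake
    obtain hlt | heq := hle.lt_or_eq
    · exact Or.inl ⟨i, by omega, hiL, htake, hlt⟩
    · have hiT : i < T.length := by omega
      rw [getD_eq_getElem _ _ hiL, getD_eq_getElem _ _ hiT] at heq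
      rw [take_add_one, take_add_one, htake, getElem?_eq_getElem hiL, getElem?_eq_getElem hiT,
        hf heq]
      exact Or.inr rfl

end List

namespace GB

variable {n : ℕ} {m : MonomialOrder (Fin n)} {S : Finset (Fin n →₀ ℕ)} {L : List (Fin n →₀ ℕ)}

theorem IsOsSet.exists_mem_le (hL : IsOsSet m S L) {a : Fin n →₀ ℕ} (ha : a ∈ S) :
    ∃ u ∈ L, u ≤ a := by
  obtain ⟨u, hua, hu_mem, hu_min⟩ := exists_minimal_le_of_wellFoundedLT (· ∈ S) a ha
  exact ⟨u, (hL.2 u).2 ⟨hu_mem, fun s hs hsu => le_antisymm hsu (hu_min hs hsu)⟩, hua⟩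

theorem IsOsSet.toSyn_getD_le_of_take_eq (hL : IsOsSet m S L) {T : List (Fin n →₀ ℕ)}
    (hT : SOrd m T) (hTint : ∀ s ∈ T, ∀ t ∈ T, s ≤ t → s = t) {i : ℕ} (hi : i < T.length)
    (hTi : T.getD i 0 ∈ S) (htake : T.take i = L.take i) :
    m.toSyn (L.getD i 0) ≤ m.toSyn (T.getD i 0) := by
  obtain ⟨u, huL, huTi⟩ := hL.exists_mem_le hTi
  by_contra! hlt
  have hu_take : u ∈ T.take i := by
    rw [htake]
    by_contra hu
    have := List.Pairwise.getD_le_of_mem_drop hL.1 0 (List.mem_drop_of_mem_of_not_mem_take huL hu)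
    exact (this.trans (m.toSyn_monotone huTi)).not_gt hlt
  have hu_lt : m.toSyn u < m.toSyn (T.getD i 0) :=
    List.Pairwise.rel_of_mem_take_of_mem_drop (R := fun a b => m.toSyn a < m.toSyn b) hT hu_take
      (List.getD_mem_drop 0 hi)
  have hu_eq : u = T.getD i 0 :=
    hTint u (List.mem_of_mem_take hu_take) _ (List.mem_of_mem_drop (List.getD_mem_drop 0 hi)) huTi
  exact hu_lt.ne (congrArg m.toSyn hu_eq)

end GB

/-- the key lemma on interreduced σ-ordered tuples. -/
theorem stmt6 {n : ℕ} (m : MonomialOrder (Fin n)) (T : List (Fin n →₀ ℕ))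
    (hT : GB.SOrd m T)
    (hTint : ∀ s ∈ T, ∀ t ∈ T, s ≤ t → s = t)
    (T' : Finset (Fin n →₀ ℕ)) (t' : Fin n →₀ ℕ) (ht' : t' ∈ T')
    (k : ℕ) (hk : k < T.length)
    (hprev : ∀ i, i < k → T.getD i 0 ∈ T')
    (hlt : m.toSyn t' < m.toSyn (T.getD k 0))
    (hndvd : ∀ t ∈ T, ¬ t ≤ t')
    (L : List (Fin n →₀ ℕ)) (hL : GB.IsOsSet m T' L) :
    GB.Prec m L T ∧ ¬ (T <+: L ∧ T ≠ L) := by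
  obtain ⟨s, hsL, hst'⟩ := hL.exists_mem_le ht'
  have hs_drop : ∀ i, T.take i = L.take i → s ∈ L.drop i := fun i htake =>
    List.mem_drop_of_mem_of_not_mem_take hsL fun hs =>
      hndvd s (List.mem_of_mem_take (htake ▸ hs)) hst'
  obtain ⟨j, hjk, hjL, htake, hjlt⟩ :=
    List.exists_take_eq_and_getD_lt m.toSyn.injective 0 hk
      (fun i hi htake => ⟨List.lt_length_of_mem_drop (hs_drop i htake),
        hL.toSyn_getD_le_of_take_eq hT hTint (by omega) (hprev i hi) htake⟩)
      (fun htake => ⟨List.lt_length_of_mem_drop (hs_drop k htake),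
        calc m.toSyn (L.getD k 0) ≤ m.toSyn s :=
              List.Pairwise.getD_le_of_mem_drop hL.1 0 (hs_drop k htake)
          _ ≤ m.toSyn t' := m.toSyn_monotone hst'
          _ < m.toSyn (T.getD k 0) := hlt⟩)
  have hjT : j < T.length := by omega
  refine ⟨Or.inr ⟨j, hjT, hjL, htake, hjlt⟩, fun ⟨hpre, _⟩ => hjlt.ne ?_⟩
  rw [List.getD_eq_getElem _ _ hjL, List.getD_eq_getElem _ _ hjT, hpre.getElem hjT]
end

section
/- Let P = Q[x_1,...,x_n], σ a term ordering, I an ideal in P with reduced σ-Gröbner basis G_σ, and p a prime not dividing den(G_σ). Then π_p(G_σ) is the reduced σ-Gröbner basis of the ideal it generates in F_p[x_1,...,x_n]. -/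
open MvPolynomial
open scoped Classical

/-! Since `p ∤ den(G)`, every element of `G` has coefficients in `ℤ_(p)`, and `π_p` is induced
by the surjection `ℤ_(p) → 𝔽_p`. The elements of `G` are monic, so `π_p` keeps their leading
terms while supports can only shrink: this gives monicity and interreducedness of `π_p(G)`.
For the Gröbner property, lift `f ∈ (π_p(G))` to `F` in the ideal generated by `G` over
`ℤ_(p)`. While the leading coefficient of `F` vanishes mod `p`, subtract from `F` a multiple of
the element of `G` whose leading term divides that of `F`: this lowers the leading term of `F`
without changing `π_p(F)`. Once it survives, `F` and `π_p(F)` have the same leading term. -/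

namespace MonomialOrder

open MvPolynomial

variable {σ R k : Type*} [CommRing R] [CommRing k] {m : MonomialOrder σ}

theorem degree_map_of_map_leadingCoeff_ne_zero (φ : R →+* k) {F : MvPolynomial σ R}
    (h : φ (m.leadingCoeff F) ≠ 0) : m.degree (map φ F) = m.degree F := by
  have hmem : m.degree F ∈ (map φ F).support := by
    rwa [mem_support_iff, coeff_map]
  exact m.toSyn.injective <| le_antisymm
    (m.degree_le_iff.2 fun _ hd => m.le_degree (support_map_subset φ F hd)) (m.le_degree hmem)

theorem leadingCoeff_map_of_map_leadingCoeff_ne_zero (φ : R →+* k) {F : MvPolynomial σ R}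
    (h : φ (m.leadingCoeff F) ≠ 0) : m.leadingCoeff (map φ F) = φ (m.leadingCoeff F) := by
  rw [leadingCoeff, degree_map_of_map_leadingCoeff_ne_zero φ h, coeff_map, leadingCoeff]

theorem degree_map_of_injective {φ : R →+* k} (hφ : Function.Injective φ)
    (F : MvPolynomial σ R) : m.degree (map φ F) = m.degree F := by
  simp only [degree, support_map_of_injective F hφ]

theorem leadingCoeff_map_of_injective {φ : R →+* k} (hφ : Function.Injective φ)
    (F : MvPolynomial σ R) : m.leadingCoeff (map φ F) = φ (m.leadingCoeff F) := by
  rw [leadingCoeff, degree_map_of_injective hφ, coeff_map, leadingCoeff]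

theorem Monic.map_leadingCoeff_ne_zero [Nontrivial k] {b : MvPolynomial σ R} (hb : m.Monic b)
    (φ : R →+* k) : φ (m.leadingCoeff b) ≠ 0 := by
  rw [hb.leadingCoeff_eq_one, map_one]
  exact one_ne_zero

theorem Monic.degree_map [Nontrivial k] {b : MvPolynomial σ R} (hb : m.Monic b) (φ : R →+* k) :
    m.degree (map φ b) = m.degree b :=
  degree_map_of_map_leadingCoeff_ne_zero φ (hb.map_leadingCoeff_ne_zero φ)

theorem Monic.map [Nontrivial k] {b : MvPolynomial σ R} (hb : m.Monic b) (φ : R →+* k) :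
    m.Monic (map φ b) := by
  rw [Monic, leadingCoeff_map_of_map_leadingCoeff_ne_zero φ (hb.map_leadingCoeff_ne_zero φ),
    hb.leadingCoeff_eq_one, map_one]

theorem exists_degree_le_degree_map (φ : R →+* k) {J : Ideal (MvPolynomial σ R)}
    {B : Set (MvPolynomial σ R)} (hB_monic : ∀ b ∈ B, m.Monic b) (hBJ : B ⊆ J)
    (hB : ∀ F ∈ J, F ≠ 0 → ∃ b ∈ B, m.degree b ≤ m.degree F)
    {F : MvPolynomial σ R} (hF : F ∈ J) (hφF : map φ F ≠ 0) :
    ∃ b ∈ B, m.degree b ≤ m.degree (map φ F) := by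
  induction hs : m.toSyn (m.degree F) using WellFoundedLT.induction generalizing F with
  | ind s ih =>
  subst hs
  have hF0 : F ≠ 0 := by rintro rfl; exact hφF (map_zero _)
  obtain ⟨b, hbB, hbF⟩ := hB F hF hF0
  by_cases hlc : φ (m.leadingCoeff F) = 0
  · have hb : IsUnit (m.leadingCoeff b) := (hB_monic b hbB).leadingCoeff_eq_one ▸ isUnit_one
    have hdeg : m.degree F ≠ 0 := by
      intro h0
      apply hφF
      rw [m.eq_C_of_degree_eq_zero h0, map_C, hlc, C_0]
    -- `reduce` cancels the leading term of `F` against `b`, with a multiplier killed by `φ`.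
    have hmap : map φ (m.reduce hb F) = map φ F := by
      simp [reduce, hlc]
    rw [← hmap]
    exact ih _ (m.degree_reduce_lt hb hbF hdeg) (J.sub_mem hF (J.mul_mem_left _ (hBJ hbB)))
      (hmap ▸ hφF) rfl
  · exact ⟨b, hbB, (degree_map_of_map_leadingCoeff_ne_zero φ hlc).symm ▸ hbF⟩

end MonomialOrder

namespace Rat

variable (p : ℕ) [hp : Fact p.Prime]

/-- The localization `ℤ_(p)`, inside `ℚ`. -/
def integersAt : Subring ℚ where
  carrier := {q | ¬ p ∣ q.den}
  mul_mem' ha hb h := (hp.out.dvd_mul.1 (h.trans (mul_den_dvd _ _))).elim ha hb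
  one_mem' := by simpa using hp.out.ne_one
  add_mem' ha hb h := (hp.out.dvd_mul.1 (h.trans (add_den_dvd _ _))).elim ha hb
  zero_mem' := by simpa using hp.out.ne_one
  neg_mem' := by simp

variable {p}

theorem mem_integersAt {q : ℚ} : q ∈ integersAt p ↔ ¬ p ∣ q.den :=
  Iff.rfl

theorem integersAt.natCast_den_ne_zero (q : integersAt p) : ((q : ℚ).den : ZMod p) ≠ 0 := by
  rw [Ne, ZMod.natCast_eq_zero_iff]
  exact q.2

variable (p)

noncomputable def reduceModP : integersAt p →+* ZMod p where
  toFun q := ((q : ℚ) : ZMod p)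
  map_one' := cast_one
  map_mul' a b := cast_mul_of_ne_zero (integersAt.natCast_den_ne_zero a)
    (integersAt.natCast_den_ne_zero b)
  map_zero' := cast_zero
  map_add' a b := cast_add_of_ne_zero (integersAt.natCast_den_ne_zero a)
    (integersAt.natCast_den_ne_zero b)

theorem reduceModP_surjective : Function.Surjective (reduceModP p) := by
  intro z
  have hz : ((z.val : ℕ) : ℚ) ∈ integersAt p := by
    rw [mem_integersAt, den_natCast]
    exact hp.out.not_dvd_one
  refine ⟨⟨_, hz⟩, ?_⟩
  change (((z.val : ℕ) : ℚ) : ZMod p) = z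
  rw [cast_natCast, ZMod.natCast_zmod_val]

end Rat

namespace GB

open MvPolynomial

variable {n : ℕ}

theorem lexp_eq_degree {K : Type*} [CommSemiring K] (m : MonomialOrder (Fin n))
    (f : MvPolynomial (Fin n) K) : lexp m f = m.degree f :=
  rfl

theorem lcoeff_eq_leadingCoeff {K : Type*} [CommSemiring K] (m : MonomialOrder (Fin n))
    (f : MvPolynomial (Fin n) K) : lcoeff m f = m.leadingCoeff f :=
  rfl

theorem isReducedGB_image_map {R k : Type*} [CommRing R] [Field k]
    [DecidableEq (MvPolynomial (Fin n) k)] (m : MonomialOrder (Fin n))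
    {φ : R →+* k} (hφ : Function.Surjective φ) {B : Finset (MvPolynomial (Fin n) R)}
    (hB_monic : ∀ b ∈ B, m.Monic b)
    (hB_gb : ∀ F ∈ Ideal.span (B : Set (MvPolynomial (Fin n) R)), F ≠ 0 →
      ∃ b ∈ B, m.degree b ≤ m.degree F)
    (hB_red : ∀ b ∈ B, ∀ d ∈ b.support, ∀ b' ∈ B, b' ≠ b → ¬ m.degree b' ≤ d) :
    IsReducedGB m (B.image (map φ))
      (Ideal.span (B.image (map φ) : Set (MvPolynomial (Fin n) k))) := by
  refine ⟨⟨?_, Ideal.subset_span, rfl, ?_⟩, ?_, ?_⟩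
  · intro h0
    obtain ⟨b, hb, hb0⟩ := Finset.mem_image.1 h0
    exact ((hB_monic b hb).map φ).ne_zero hb0
  · intro f hf hf0
    rw [Finset.coe_image, ← Ideal.map_span] at hf
    obtain ⟨F, hF, rfl⟩ := (Ideal.mem_map_iff_of_surjective _ (map_surjective φ hφ)).1 hf
    obtain ⟨b, hb, hbF⟩ :=
      m.exists_degree_le_degree_map φ hB_monic Ideal.subset_span hB_gb hF hf0
    refine ⟨map φ b, Finset.mem_image_of_mem _ hb, ?_⟩
    rwa [lexp_eq_degree, lexp_eq_degree, (hB_monic b hb).degree_map]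
  · intro g hg
    obtain ⟨b, hb, rfl⟩ := Finset.mem_image.1 hg
    exact (hB_monic b hb).map φ
  · intro g hg d hd g' hg' hne
    obtain ⟨b, hb, rfl⟩ := Finset.mem_image.1 hg
    obtain ⟨b', hb', rfl⟩ := Finset.mem_image.1 hg'
    rw [lexp_eq_degree, (hB_monic b' hb').degree_map]
    exact hB_red b hb d (support_map_subset φ b hd) b' hb' (fun h => hne (h ▸ rfl))

theorem isReducedGB_image_map_of_isReducedGB {R K k : Type*} [CommRing R] [Field K] [Field k]
    [DecidableEq (MvPolynomial (Fin n) K)] [DecidableEq (MvPolynomial (Fin n) k)]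
    (m : MonomialOrder (Fin n)) {ι : R →+* K} (hι : Function.Injective ι) {φ : R →+* k}
    (hφ : Function.Surjective φ) {B : Finset (MvPolynomial (Fin n) R)}
    {I : Ideal (MvPolynomial (Fin n) K)} (hB : IsReducedGB m (B.image (map ι)) I) :
    IsReducedGB m (B.image (map φ))
      (Ideal.span (B.image (map φ) : Set (MvPolynomial (Fin n) k))) := by
  obtain ⟨⟨-, -, hspan, hgb⟩, hmonic, hred⟩ := hB
  have hmap_inj := map_injective (σ := Fin n) ι hι
  refine isReducedGB_image_map m hφ (fun b hb => ?_) (fun F hF hF0 => ?_)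
    (fun b hb d hd b' hb' hne => ?_)
  · apply hι
    rw [map_one, ← m.leadingCoeff_map_of_injective hι, ← lcoeff_eq_leadingCoeff]
    exact hmonic _ (Finset.mem_image_of_mem _ hb)
  · have hFI : map ι F ∈ I := by
      rw [← hspan, Finset.coe_image, ← Ideal.map_span]
      exact Ideal.mem_map_of_mem _ hF
    obtain ⟨g, hg, hgF⟩ := hgb _ hFI (fun h => hF0 (hmap_inj (h.trans (map_zero _).symm)))
    obtain ⟨b, hb, rfl⟩ := Finset.mem_image.1 hg
    rw [lexp_eq_degree, lexp_eq_degree, m.degree_map_of_injective hι,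
      m.degree_map_of_injective hι] at hgF
    exact ⟨b, hb, hgF⟩
  · have hd' : d ∈ (map ι b).support := by rwa [support_map_of_injective _ hι]
    have h := hred _ (Finset.mem_image_of_mem _ hb) d hd' _ (Finset.mem_image_of_mem _ hb')
      (hmap_inj.ne hne)
    rwa [lexp_eq_degree, m.degree_map_of_injective hι] at h

section Reduction

variable (p : ℕ) [Fact p.Prime]

theorem redQ_eq_ratCast (a : ℚ) : redQ p a = (a : ZMod p) := by
  rw [redQ, Rat.cast_def, div_eq_mul_inv]

theorem coeff_piP (f : MvPolynomial (Fin n) ℚ) (d : Fin n →₀ ℕ) :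
    coeff d (piP p f) = ((coeff d f : ℚ) : ZMod p) := by
  rw [piP, coeff_sum]
  simp only [coeff_monomial, Finset.sum_ite_eq', mem_support_iff, redQ_eq_ratCast]
  split_ifs with h
  · rfl
  · rw [not_not.1 h, Rat.cast_zero]

theorem piP_comp_map_subtype :
    piP p ∘ map (Rat.integersAt p).subtype = map (σ := Fin n) (Rat.reduceModP p) := by
  funext F
  ext d
  rw [Function.comp_apply, coeff_piP, coeff_map, coeff_map]
  rfl

theorem mem_range_map_subtype_of_not_dvd_denF {G : Finset (MvPolynomial (Fin n) ℚ)}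
    (hp : ¬ p ∣ denF G) {g : MvPolynomial (Fin n) ℚ} (hg : g ∈ G) :
    g ∈ Set.range (map (Rat.integersAt p).subtype) := by
  rw [mem_range_map_iff_coeffs_subset, Subring.coe_subtype, Subtype.range_coe]
  intro c hc
  obtain ⟨d, hd, rfl⟩ := mem_coeffs_iff.1 hc
  have hden : (coeff d g).den ∣ denF G :=
    (Finset.dvd_lcm (f := fun d => (coeff d g).den) hd).trans (Finset.dvd_lcm (f := den) hg)
  exact fun h => hp (h.trans hden)

end Reduction

end GB

/-- reduction mod a σ-good prime of the reduced σ-Gröbner basis is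
the reduced σ-Gröbner basis of the ideal it generates. -/
theorem stmt7 {n : ℕ} (m : MonomialOrder (Fin n))
    (I : Ideal (MvPolynomial (Fin n) ℚ)) (G : Finset (MvPolynomial (Fin n) ℚ))
    (hG : GB.IsReducedGB m G I) (p : ℕ) [Fact p.Prime] (hp : ¬ p ∣ GB.denF G) :
    GB.IsReducedGB m (G.image (GB.piP p))
      (Ideal.span ((G.image (GB.piP p) : Finset (MvPolynomial (Fin n) (ZMod p))) :
        Set (MvPolynomial (Fin n) (ZMod p)))) := by
  have hG_range : (G : Set (MvPolynomial (Fin n) ℚ)) ⊆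
      MvPolynomial.map (Rat.integersAt p).subtype '' Set.univ := by
    rw [Set.image_univ]
    exact fun g hg => GB.mem_range_map_subtype_of_not_dvd_denF p hp hg
  obtain ⟨B, -, rfl⟩ := Finset.subset_set_image_iff.1 hG_range
  rw [Finset.image_image, GB.piP_comp_map_subtype]
  exact GB.isReducedGB_image_map_of_isReducedGB m Subtype.val_injective
    (Rat.reduceModP_surjective p) hG
end

section
/- Let P = Q[x_1,...,x_n], let σ and τ be two term orderings, I an ideal in P with reduced Gröbner bases G_σ and G_τ with respect to σ and τ respectively. If a prime p divides neither den(G_σ) nor den(G_τ), then the ideal generated by π_p(G_σ) equals the ideal generated by π_p(G_τ) in F_p[x_1,...,x_n]. -/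
open MvPolynomial
open scoped Classical

/-!
Lift `G_σ` to `ℤ_(p)[x]`, where it stays monic. Dividing the lift of any `p`-integral
`f ∈ I` by it in `ℤ_(p)[x]` leaves a remainder whose image in `ℚ[x]` lies in `I` and has no
monomial in `LT_σ(I)`, so the remainder is zero. Reducing the resulting representation of `f`
modulo `p` puts `π_p(f)` into `⟨π_p(G_σ)⟩`; applied to `f ∈ G_τ` and symmetrically this gives
the equality.
-/

namespace Rat

variable (α : Type*) [DivisionRing α]

/-- For `α = ZMod p` this is the localization `ℤ_(p)`. -/
def castSubring : Subring ℚ where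
  carrier := {q | (q.den : α) ≠ 0}
  zero_mem' := by simp
  one_mem' := by simp
  add_mem' {a b} ha hb := ne_zero_of_dvd_ne_zero (by simpa using mul_ne_zero ha hb)
    (Nat.cast_dvd_cast (Rat.add_den_dvd a b))
  mul_mem' {a b} ha hb := ne_zero_of_dvd_ne_zero (by simpa using mul_ne_zero ha hb)
    (Nat.cast_dvd_cast (Rat.mul_den_dvd a b))
  neg_mem' {a} ha := by simpa using ha

noncomputable def castSubringHom : castSubring α →+* α where
  toFun q := (q : ℚ)
  map_one' := by simp
  map_mul' a b := Rat.cast_mul_of_ne_zero a.2 b.2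
  map_zero' := by simp
  map_add' a b := Rat.cast_add_of_ne_zero a.2 b.2

end Rat

namespace GB

variable {n : ℕ}

section MonomialOrder

variable {K : Type*} [Field K] {m : MonomialOrder (Fin n)}

theorem IsGB.eq_zero_of_forall_not_lexp_le {G : Finset (MvPolynomial (Fin n) K)}
    {I : Ideal (MvPolynomial (Fin n) K)} (hG : IsGB m G I) {r : MvPolynomial (Fin n) K}
    (hr : r ∈ I) (hrG : ∀ c ∈ r.support, ∀ g ∈ G, ¬ lexp m g ≤ c) : r = 0 := by
  by_contra hr0
  obtain ⟨g, hg, hle⟩ := hG.2.2.2 r hr hr0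
  exact hrG _ (m.degree_mem_support hr0) g hg hle

variable {R : Type*} [CommRing R] {φ : R →+* K}

theorem degree_map_of_injective (hφ : Function.Injective φ) (F : MvPolynomial (Fin n) R) :
    m.degree (map φ F) = m.degree F := by
  rw [MonomialOrder.degree, MonomialOrder.degree, support_map_of_injective F hφ]

theorem leadingCoeff_map_of_injective (hφ : Function.Injective φ) (F : MvPolynomial (Fin n) R) :
    m.leadingCoeff (map φ F) = φ (m.leadingCoeff F) := by
  rw [MonomialOrder.leadingCoeff, MonomialOrder.leadingCoeff, degree_map_of_injective hφ,
    coeff_map]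

theorem map_mem_span_image_of_isGB (hφ : Function.Injective φ) {k : Type*} [CommRing k]
    (ψ : R →+* k) {G : Finset (MvPolynomial (Fin n) K)} {I : Ideal (MvPolynomial (Fin n) K)}
    (hG : IsGB m G I) {B : Set (MvPolynomial (Fin n) R)}
    (hB : ∀ b ∈ B, IsUnit (m.leadingCoeff b)) (hBG : map φ '' B = G)
    {F : MvPolynomial (Fin n) R} (hF : map φ F ∈ I) :
    map ψ F ∈ Ideal.span (map ψ '' B) := by
  obtain ⟨g, r, hFr, -, hr⟩ := m.div_set hB F
  set q := Finsupp.linearCombination _ (fun b : B ↦ (b : MvPolynomial (Fin n) R)) g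
  have hq : q ∈ Ideal.span B := (Finsupp.mem_span_iff_linearCombination _ _ _).2 ⟨g, rfl⟩
  have hqI : map φ q ∈ I := by
    rw [← hG.2.2.1, ← hBG, ← Ideal.map_span]
    exact Ideal.mem_map_of_mem _ hq
  have hrI : map φ r ∈ I := by
    rw [show r = F - q by rw [hFr]; ring, map_sub]
    exact I.sub_mem hF hqI
  have hr0 : map φ r = 0 := by
    refine hG.eq_zero_of_forall_not_lexp_le hrI fun c hc g hg ↦ ?_
    obtain ⟨b, hb, rfl⟩ := (Set.ext_iff.1 hBG g).2 hg
    rw [support_map_of_injective r hφ] at hc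
    show ¬ m.degree (map φ b) ≤ c
    exact degree_map_of_injective hφ b ▸ hr c hc b hb
  rw [hFr, map_injective φ hφ (hr0.trans (map_zero _).symm), add_zero, ← Ideal.map_span]
  exact Ideal.mem_map_of_mem _ hq

end MonomialOrder

theorem not_dvd_den_of_not_dvd_denF {p : ℕ} {G : Finset (MvPolynomial (Fin n) ℚ)}
    (hp : ¬ p ∣ denF G) {g : MvPolynomial (Fin n) ℚ} (hg : g ∈ G) : ¬ p ∣ den g :=
  fun h ↦ hp (h.trans (Finset.dvd_lcm hg))

section ZMod

variable (p : ℕ) [Fact p.Prime]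

local notation "ℤ₍ₚ₎" => Rat.castSubring (ZMod p)

theorem mem_castSubring_zmod_iff {q : ℚ} : q ∈ ℤ₍ₚ₎ ↔ ¬ p ∣ q.den :=
  (ZMod.natCast_eq_zero_iff _ _).not

theorem redQ_eq_cast (q : ℚ) : redQ p q = q := by
  rw [redQ, Rat.cast_def, div_eq_mul_inv]

theorem piP_map_subtype (F : MvPolynomial (Fin n) ℤ₍ₚ₎) :
    piP p (map (ℤ₍ₚ₎).subtype F) = map (Rat.castSubringHom (ZMod p)) F := by
  conv_rhs => rw [F.as_sum]
  rw [piP, support_map_of_injective F Subtype.val_injective, map_sum]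
  refine Finset.sum_congr rfl fun d _ ↦ ?_
  rw [coeff_map, map_monomial, redQ_eq_cast]
  rfl

theorem mem_range_map_subtype_of_not_dvd_den {f : MvPolynomial (Fin n) ℚ} (hf : ¬ p ∣ den f) :
    f ∈ Set.range (map (ℤ₍ₚ₎).subtype) := by
  refine mem_range_map_iff_coeffs_subset.2 fun c hc ↦ ?_
  obtain ⟨d, hd, rfl⟩ := mem_coeffs_iff.1 hc
  refine ⟨⟨_, (mem_castSubring_zmod_iff p).2 fun h ↦ hf (h.trans ?_)⟩, rfl⟩
  exact Finset.dvd_lcm hd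

theorem piP_mem_span_of_isGB {m : MonomialOrder (Fin n)} {G : Finset (MvPolynomial (Fin n) ℚ)}
    {I : Ideal (MvPolynomial (Fin n) ℚ)} (hG : IsGB m G I) (hmonic : ∀ g ∈ G, lcoeff m g = 1)
    (hpG : ¬ p ∣ denF G) {f : MvPolynomial (Fin n) ℚ} (hf : f ∈ I) (hpf : ¬ p ∣ den f) :
    piP p f ∈ Ideal.span (G.image (piP p) : Set (MvPolynomial (Fin n) (ZMod p))) := by
  have hφ : Function.Injective (ℤ₍ₚ₎).subtype := Subtype.val_injective
  obtain ⟨F, rfl⟩ := mem_range_map_subtype_of_not_dvd_den p hpf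
  set B : Set (MvPolynomial (Fin n) ℤ₍ₚ₎) :=
    map (ℤ₍ₚ₎).subtype ⁻¹' (G : Set (MvPolynomial (Fin n) ℚ))
  have hBG : map (ℤ₍ₚ₎).subtype '' B = G := Set.image_preimage_eq_of_subset fun g hg ↦
    mem_range_map_subtype_of_not_dvd_den p (not_dvd_den_of_not_dvd_denF hpG hg)
  have hB : ∀ b ∈ B, IsUnit (m.leadingCoeff b) := fun b hb ↦ by
    have hlc : m.leadingCoeff (map (ℤ₍ₚ₎).subtype b) = 1 := hmonic _ hb
    rw [leadingCoeff_map_of_injective hφ] at hlc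
    exact (hφ (hlc.trans (map_one _).symm)) ▸ isUnit_one
  rw [piP_map_subtype]
  refine Ideal.span_mono ?_ (map_mem_span_image_of_isGB hφ _ hG hB hBG hf)
  rintro _ ⟨b, hb, rfl⟩
  exact Finset.mem_coe.2 (Finset.mem_image.2 ⟨_, hb, piP_map_subtype p b⟩)

theorem span_image_piP_le {m : MonomialOrder (Fin n)} {G G' : Finset (MvPolynomial (Fin n) ℚ)}
    {I : Ideal (MvPolynomial (Fin n) ℚ)} (hG : IsReducedGB m G I) (hpG : ¬ p ∣ denF G)
    (hG'I : (G' : Set (MvPolynomial (Fin n) ℚ)) ⊆ I) (hpG' : ¬ p ∣ denF G') :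
    Ideal.span (G'.image (piP p) : Set (MvPolynomial (Fin n) (ZMod p))) ≤
      Ideal.span (G.image (piP p) : Set (MvPolynomial (Fin n) (ZMod p))) := by
  rw [Ideal.span_le, Finset.coe_image]
  rintro _ ⟨g, hg, rfl⟩
  exact piP_mem_span_of_isGB p hG.1 hG.2.1 hpG (hG'I hg) (not_dvd_den_of_not_dvd_denF hpG' hg)

end ZMod

end GB

/-- if `p` is both σ-good and τ-good for `I` then
`⟨π_p(G_σ)⟩ = ⟨π_p(G_τ)⟩`. -/
theorem stmt9 {n : ℕ} (mσ mτ : MonomialOrder (Fin n))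
    (I : Ideal (MvPolynomial (Fin n) ℚ)) (Gσ Gτ : Finset (MvPolynomial (Fin n) ℚ))
    (hGσ : GB.IsReducedGB mσ Gσ I) (hGτ : GB.IsReducedGB mτ Gτ I)
    (p : ℕ) [Fact p.Prime] (hpσ : ¬ p ∣ GB.denF Gσ) (hpτ : ¬ p ∣ GB.denF Gτ) :
    Ideal.span ((Gσ.image (GB.piP p) : Finset (MvPolynomial (Fin n) (ZMod p))) :
        Set (MvPolynomial (Fin n) (ZMod p))) =
      Ideal.span ((Gτ.image (GB.piP p) : Finset (MvPolynomial (Fin n) (ZMod p))) :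
        Set (MvPolynomial (Fin n) (ZMod p))) :=
  le_antisymm (GB.span_image_piP_le p hGτ hpτ hGσ.1.2.1 hpσ)
    (GB.span_image_piP_le p hGσ hpσ hGτ.1.2.1 hpτ)
end

section
/- With the setup of the previous statement (G_σ the reduced σ-Gröbner basis of a nonzero ideal I ⊆ Q[x_1,...,x_n], and G̃ a minimal strong σ-Gröbner basis of ⟨prim(G_σ)⟩ ⊆ Z[x_1,...,x_n] indexed so LT_σ(g̃_i) = LT_σ(g_i) for i ≤ r): for each i = 1,...,r, the leading coefficient LC_σ(g̃_i) divides the leading coefficient LC_σ(prim(g_i)), which equals den(g_i). -/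
open MvPolynomial
open scoped Classical

/-!
Since `g_i` is monic, the gcd of the coefficients of `den(g_i) • g_i` divides `den(g_i)`, and
dividing by it would still clear all denominators of `g_i`; so this content is `1`,
`prim(g_i) = den(g_i) • g_i` and `LC_σ(prim(g_i)) = den(g_i)`.

For the divisibility, `prim(g_i)` lies in `J = ⟨prim(G_σ)⟩` and has the same leading
power-product as `g̃_i`. In a minimal strong Gröbner basis `G̃` of `J`, the leading coefficient of `g ∈ G̃`
divides that of every `f ∈ J` with the same leading power-product: a Bézout combination of `f`
and `g` has leading coefficient `gcd(LC f, LC g)`, its leading monomial is divisible by that of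
some `g' ∈ G̃`, and then `LM g' ∣ LM g` forces `g' = g` by minimality.
-/

namespace MonomialOrder

variable {σ R : Type*} [CommRing R] (m : MonomialOrder σ)

theorem degree_smul_add_smul_of_degree_eq {f g : MvPolynomial σ R} (u v : R)
    (hfg : m.degree f = m.degree g)
    (hc : u * m.leadingCoeff f + v * m.leadingCoeff g ≠ 0) :
    m.degree (u • f + v • g) = m.degree g := by
  have hcoeff :
      (u • f + v • g).coeff (m.degree g) = u * m.leadingCoeff f + v * m.leadingCoeff g := by
    simp [leadingCoeff, hfg]
  apply m.toSyn.injective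
  apply le_antisymm
  · calc m.toSyn (m.degree (u • f + v • g))
        ≤ m.toSyn (m.degree (u • f)) ⊔ m.toSyn (m.degree (v • g)) := degree_add_le
      _ ≤ m.toSyn (m.degree g) := by
        refine sup_le ?_ degree_smul_le
        rw [← hfg]
        exact degree_smul_le
  · exact m.le_degree (mem_support_iff.2 (hcoeff ▸ hc))

end MonomialOrder

theorem Rat.intCast_num_mul_natCast_of_den_dvd {q : ℚ} {k : ℕ} (h : q.den ∣ k) :
    ((q * k).num : ℚ) = q * k := by
  obtain ⟨c, rfl⟩ := h
  have hq : q * ((q.den * c : ℕ) : ℚ) = ((q.num * c : ℤ) : ℚ) := by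
    push_cast
    rw [← mul_assoc, Rat.mul_den_eq_num]
  rw [hq, Rat.num_intCast]

theorem Rat.den_dvd_of_mul_intCast_eq_intCast {q : ℚ} {k z : ℤ} (hk : k ≠ 0)
    (h : q * k = z) : (q.den : ℤ) ∣ k := by
  have hq : q = Rat.divInt z k := by
    rw [← Rat.intCast_div_eq_divInt, ← h, mul_div_cancel_right₀ _ (Int.cast_ne_zero.2 hk)]
  exact hq ▸ Rat.den_dvd z k

theorem List.getD_mem_toFinset {α : Type*} [DecidableEq α] {l : List α} {i : ℕ}
    (hi : i < l.length) (d : α) : l.getD i d ∈ l.toFinset := by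
  rw [List.getD_eq_getElem _ _ hi]
  exact List.mem_toFinset.2 (List.getElem_mem hi)

namespace GB

variable {n : ℕ} {m : MonomialOrder (Fin n)}

theorem IsMinStrongGB.lcoeff_dvd_of_lexp_eq {G : Finset (MvPolynomial (Fin n) ℤ)}
    {J : Ideal (MvPolynomial (Fin n) ℤ)} (hG : IsMinStrongGB m G J)
    {g f : MvPolynomial (Fin n) ℤ} (hg : g ∈ G) (hf : f ∈ J) (hfg : lexp m f = lexp m g) :
    lcoeff m g ∣ lcoeff m f := by
  obtain ⟨⟨hG0, hspan, hstrong⟩, hmin⟩ := hG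
  set a := lcoeff m f with ha_def
  set b := lcoeff m g with hb_def
  have hb : b ≠ 0 := m.leadingCoeff_ne_zero_iff.2 (ne_of_mem_of_not_mem hg hG0)
  have hgcd : (a.gcd b : ℤ) ≠ 0 := Int.natCast_ne_zero.2 (Int.gcd_ne_zero_right hb)
  have hbezout : a.gcdA b * a + a.gcdB b * b = a.gcd b := by
    rw [Int.gcd_eq_gcd_ab]; ring
  set h := a.gcdA b • f + a.gcdB b • g
  have hlexp : lexp m h = lexp m g :=
    m.degree_smul_add_smul_of_degree_eq _ _ hfg (hbezout ▸ hgcd)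
  have hlcoeff : lcoeff m h = a.gcd b := by
    rw [← hbezout, lcoeff, hlexp, coeff_add, coeff_smul, coeff_smul, smul_eq_mul, smul_eq_mul]
    rw [ha_def, lcoeff, hfg, hb_def, lcoeff]
  have hgJ : g ∈ J := hspan ▸ Ideal.subset_span hg
  have hhJ : h ∈ J := J.add_mem (J.smul_of_tower_mem _ hf) (J.smul_of_tower_mem _ hgJ)
  have hh0 : h ≠ 0 := m.leadingCoeff_ne_zero_iff.1 (show lcoeff m h ≠ 0 by rwa [hlcoeff])
  obtain ⟨k, hk, hkh⟩ := hstrong h hhJ hh0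
  rw [LM, LM, monomial_dvd_monomial, hlexp, hlcoeff] at hkh
  have hkg : k = g := by
    by_contra hne
    refine hmin k hk g hg hne ?_
    rw [LM, LM, monomial_dvd_monomial]
    exact ⟨Or.inr (hkh.1.resolve_left hgcd), hkh.2.trans (Int.gcd_dvd_right _ _)⟩
  rw [hb_def, ← hkg]
  exact hkh.2.trans (Int.gcd_dvd_left _ _)

theorem den_ne_zero (f : MvPolynomial (Fin n) ℚ) : den f ≠ 0 := by
  rw [den, Ne, Finset.lcm_eq_zero_iff]
  rintro ⟨d, -, hd⟩
  exact (coeff d f).den_ne_zero hd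

theorem den_coeff_dvd_den (f : MvPolynomial (Fin n) ℚ) (d : Fin n →₀ ℕ) :
    (coeff d f).den ∣ den f := by
  by_cases hd : d ∈ f.support
  · exact Finset.dvd_lcm hd
  · rw [notMem_support_iff.1 hd, Rat.den_zero]
    exact one_dvd _

theorem coeff_intScale (f : MvPolynomial (Fin n) ℚ) (d : Fin n →₀ ℕ) :
    coeff d (intScale f) = (coeff d f * den f).num := by
  rw [intScale, coeff_sum]
  simp +contextual [coeff_monomial]

theorem intCast_coeff_intScale (f : MvPolynomial (Fin n) ℚ) (d : Fin n →₀ ℕ) :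
    ((coeff d (intScale f) : ℤ) : ℚ) = coeff d f * den f := by
  rw [coeff_intScale]
  exact Rat.intCast_num_mul_natCast_of_den_dvd (den_coeff_dvd_den f d)

theorem support_intScale (f : MvPolynomial (Fin n) ℚ) : (intScale f).support = f.support := by
  ext d
  rw [mem_support_iff, mem_support_iff, ← Int.cast_ne_zero (α := ℚ), intCast_coeff_intScale]
  simp [den_ne_zero]

theorem gcd_coeff_intScale_eq_one {g : MvPolynomial (Fin n) ℚ} {d₀ : Fin n →₀ ℕ}
    (h₀ : coeff d₀ g = 1) :
    (intScale g).support.gcd (fun d => coeff d (intScale g)) = 1 := by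
  set t := (intScale g).support.gcd (fun d => coeff d (intScale g))
  have hD : (den g : ℤ) ≠ 0 := Int.natCast_ne_zero.2 (den_ne_zero g)
  have ht_dvd : ∀ d, t ∣ coeff d (intScale g) := by
    intro d
    by_cases hd : d ∈ (intScale g).support
    · exact Finset.gcd_dvd hd
    · rw [notMem_support_iff.1 hd]
      exact dvd_zero t
  have hcoeff₀ : coeff d₀ (intScale g) = den g := by
    rw [coeff_intScale, h₀, one_mul, Rat.num_natCast]
  obtain ⟨r, hr⟩ : t ∣ (den g : ℤ) := hcoeff₀ ▸ ht_dvd d₀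
  have ht : t ≠ 0 := left_ne_zero_of_mul (hr ▸ hD)
  have hr0 : r ≠ 0 := right_ne_zero_of_mul (hr ▸ hD)
  -- `r = den g / t` clears every denominator of `g`, so it is a multiple of `den g`
  have hden_dvd : (den g : ℤ) ∣ r := by
    refine Int.ofNat_dvd_left.2 (Finset.lcm_dvd fun d _ => Int.ofNat_dvd_left.1 ?_)
    obtain ⟨s, hs⟩ := ht_dvd d
    refine Rat.den_dvd_of_mul_intCast_eq_intCast hr0 (z := s) ?_
    have hts := intCast_coeff_intScale g d
    have hDq : ((den g : ℕ) : ℚ) = t * r := by exact_mod_cast hr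
    rw [hs, hDq] at hts
    push_cast at hts
    refine mul_left_cancel₀ (Int.cast_ne_zero.2 ht) ?_
    linear_combination -hts
  have ht1 : t ∣ 1 := by
    rw [hr] at hden_dvd
    exact (mul_dvd_mul_iff_right hr0).1 (by rwa [one_mul])
  exact Int.eq_one_of_dvd_one Finset.Int.finsetGcd_nonneg ht1

theorem primQ_eq_intScale {g : MvPolynomial (Fin n) ℚ} {d₀ : Fin n →₀ ℕ} (h₀ : coeff d₀ g = 1) :
    primQ g = intScale g := by
  rw [primQ, gcd_coeff_intScale_eq_one h₀]
  simp only [Int.ediv_one]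
  exact support_sum_monomial_coeff _

theorem lexp_primQ {g : MvPolynomial (Fin n) ℚ} (hg : lcoeff m g = 1) : lexp m (primQ g) = lexp m g := by
  rw [primQ_eq_intScale hg, lexp, lexp, support_intScale]

theorem lcoeff_primQ {g : MvPolynomial (Fin n) ℚ} (hg : lcoeff m g = 1) : lcoeff m (primQ g) = den g := by
  rw [lcoeff, lexp_primQ hg, primQ_eq_intScale hg, coeff_intScale]
  rw [show coeff (lexp m g) g = 1 from hg, one_mul, Rat.num_natCast]

end GB

theorem stmt11_general {n : ℕ} (m : MonomialOrder (Fin n))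
    (I : Ideal (MvPolynomial (Fin n) ℚ))
    (Gl : List (MvPolynomial (Fin n) ℚ))
    (hGred : GB.IsReducedGB m Gl.toFinset I)
    (Gtl : List (MvPolynomial (Fin n) ℤ))
    (hGt : GB.IsMinStrongGB m Gtl.toFinset
      (Ideal.span (GB.primQ '' (Gl.toFinset : Set (MvPolynomial (Fin n) ℚ)))))
    (hlen : Gl.length ≤ Gtl.length)
    (hidx : ∀ i < Gl.length, GB.lexp m (Gtl.getD i 0) = GB.lexp m (Gl.getD i 0)) :
    ∀ i < Gl.length,
      GB.lcoeff m (Gtl.getD i 0) ∣ GB.lcoeff m (GB.primQ (Gl.getD i 0)) ∧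
      GB.lcoeff m (GB.primQ (Gl.getD i 0)) = (GB.den (Gl.getD i 0) : ℤ) := by
  intro i hi
  have hgi : Gl.getD i 0 ∈ Gl.toFinset := List.getD_mem_toFinset hi 0
  have hmonic : GB.lcoeff m (Gl.getD i 0) = 1 := hGred.2.1 _ hgi
  refine ⟨hGt.lcoeff_dvd_of_lexp_eq (List.getD_mem_toFinset (hi.trans_le hlen) 0)
    (Ideal.subset_span ⟨_, hgi, rfl⟩) ?_, GB.lcoeff_primQ hmonic⟩
  rw [GB.lexp_primQ hmonic, hidx i hi]

/-- with the indexing of Statement 10, `LC_σ(g̃_i)` divides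
`LC_σ(prim(g_i)) = den(g_i)` for `i = 1, …, r`. -/
theorem stmt11 {n : ℕ} (m : MonomialOrder (Fin n))
    (I : Ideal (MvPolynomial (Fin n) ℚ)) (hI : I ≠ ⊥)
    (Gl : List (MvPolynomial (Fin n) ℚ)) (hGnd : Gl.Nodup)
    (hGred : GB.IsReducedGB m Gl.toFinset I)
    (hsort : Gl.Pairwise fun g h => m.toSyn (GB.lexp m g) < m.toSyn (GB.lexp m h))
    (Gtl : List (MvPolynomial (Fin n) ℤ)) (hGtnd : Gtl.Nodup)
    (hGt : GB.IsMinStrongGB m Gtl.toFinset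
      (Ideal.span (GB.primQ '' (Gl.toFinset : Set (MvPolynomial (Fin n) ℚ)))))
    (hlen : Gl.length ≤ Gtl.length)
    (hidx : ∀ i < Gl.length, GB.lexp m (Gtl.getD i 0) = GB.lexp m (Gl.getD i 0)) :
    ∀ i < Gl.length,
      GB.lcoeff m (Gtl.getD i 0) ∣ GB.lcoeff m (GB.primQ (Gl.getD i 0)) ∧
      GB.lcoeff m (GB.primQ (Gl.getD i 0)) = (GB.den (Gl.getD i 0) : ℤ) :=
  stmt11_general m I Gl hGred Gtl hGt hlen hidx
end
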